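/- For every LP^MLN program 𝔽 over 𝒫 and every interpretation X ⊆ 𝒫, X is a soft stable model of 𝔽 if and only if there is no proper subset Y of X such that the interpretation Y' ∪ X of 𝒫 ∪ 𝒫' satisfies Δ_{𝒫'}({𝔽̄}^ch). -/

import Mathlib

namespace LPMLN

/-- Propositional formulas over a set of atoms `P`, built from atoms and `⊥`
using `∧`, `∨`, `→`. -/
inductive Formula (P : Type) : Type where
  | atom : P → Formula P
  | bot  : Formula P
  | and  : Formula P → Formula P → Formula P
  | or   : Formula P → Formula P → Formula P
  | imp  : Formula P → Formula P → Formula P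
deriving DecidableEq

variable {P : Type} [DecidableEq P]

/-- `¬F` abbreviates `F → ⊥`. -/
def Formula.neg (F : Formula P) : Formula P := .imp F .bot

/-- Classical evaluation of a formula in an interpretation `X ⊆ P`. -/
def Formula.eval (X : Finset P) : Formula P → Bool
  | .atom p => decide (p ∈ X)
  | .bot => false
  | .and F G => F.eval X && G.eval X
  | .or F G => F.eval X || G.eval X
  | .imp F G => !(F.eval X) || G.eval X

/-- Classical satisfaction `X ⊨ F`. -/
def Formula.sat (X : Finset P) (F : Formula P) : Prop := F.eval X = true

/-- The reduct `F^X`: every maximal subformula not satisfied by `X` is replaced by `⊥`. -/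
def Formula.reduct (X : Finset P) : Formula P → Formula P
  | .atom p => if p ∈ X then .atom p else .bot
  | .bot => .bot
  | .and F G => if (Formula.and F G).eval X then .and (F.reduct X) (G.reduct X) else .bot
  | .or F G => if (Formula.or F G).eval X then .or (F.reduct X) (G.reduct X) else .bot
  | .imp F G => if (Formula.imp F G).eval X then .imp (F.reduct X) (G.reduct X) else .bot

/-- `X` satisfies a (finite) set of formulas. -/
def satSet (X : Finset P) (Γ : Finset (Formula P)) : Prop := ∀ F ∈ Γ, F.sat X

/-- The reduct `Γ^X` of a finite set of formulas. -/
def reductSet (X : Finset P) (Γ : Finset (Formula P)) : Finset (Formula P) :=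
  Γ.image (Formula.reduct X)

/-- `X` is a stable model of `Γ` if `X ⊨ Γ^X` and no proper subset of `X` satisfies `Γ^X`. -/
def StableModel (Γ : Finset (Formula P)) (X : Finset P) : Prop :=
  satSet X (reductSet X Γ) ∧ ∀ Y, Y ⊂ X → ¬ satSet Y (reductSet X Γ)

/-- A weight is a real number (soft) or the symbol `α` (hard). -/
inductive Weight : Type where
  | soft : ℝ → Weight
  | hard : Weight

noncomputable instance : DecidableEq Weight := Classical.decEq _

/-- An LP^MLN program: a finite set of weighted formulas `w : R`. -/
abbrev Program (P : Type) [DecidableEq P] := Finset (Weight × Formula P)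

/-- `𝔽_X`: the weighted formulas of `𝔽` whose formula is satisfied by `X`. -/
noncomputable def progSat (𝔽 : Program P) (X : Finset P) : Program P :=
  𝔽.filter (fun r => r.2.eval X = true)

/-- `𝔽̄`: the formulas of `𝔽`, with weights dropped. -/
noncomputable def formulas (𝔽 : Program P) : Finset (Formula P) := 𝔽.image Prod.snd

/-- `X` is a soft stable model of `𝔽` (i.e. `X ∈ SM[𝔽]`) if `X` is a stable model of `𝔽̄_X`. -/
def SoftStable (𝔽 : Program P) (X : Finset P) : Prop :=
  StableModel (formulas (progSat 𝔽 X)) X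

/-- w-expressions: either zero or a formal expression `e^{c₁ + c₂·α}` with `c₁ : ℝ`, `c₂ : ℤ`. -/
inductive WExpr : Type where
  | zero : WExpr
  | exp : ℝ → ℤ → WExpr

/-- Multiplication of w-expressions: add exponents componentwise; zero is absorbing. -/
def WExpr.mul : WExpr → WExpr → WExpr
  | .zero, _ => .zero
  | _, .zero => .zero
  | .exp a b, .exp c d => .exp (a + c) (b + d)

/-- Inverse of a w-expression: negate both exponents. -/
def WExpr.inv : WExpr → WExpr
  | .zero => .zero
  | .exp a b => .exp (-a) (-b)

/-- Evaluation of a w-expression at a real number `a`. -/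
noncomputable def WExpr.eval (a : ℝ) : WExpr → ℝ
  | .zero => 0
  | .exp c₁ c₂ => Real.exp (c₁ + c₂ * a)

/-- The real contribution of a weight (hard rules contribute `0` to the soft sum). -/
def softWeight : Weight → ℝ
  | .soft r => r
  | .hard => 0

/-- Sum of the weights of the soft rules of `𝔽`. -/
noncomputable def softSum (𝔽 : Program P) : ℝ := ∑ r ∈ 𝔽, softWeight r.1

/-- The number of hard rules of `𝔽`. -/
noncomputable def hardCount (𝔽 : Program P) : ℤ :=
  ((𝔽.filter (fun r => r.1 = Weight.hard)).card : ℤ)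

/-- `TW(𝔽) = e^{c₁ + c₂·α}` where `c₁` is the sum of the soft weights and
`c₂` the number of hard rules. -/
noncomputable def TW (𝔽 : Program P) : WExpr := .exp (softSum 𝔽) (hardCount 𝔽)

open Classical in
/-- `W_𝔽(X) = TW(𝔽_X)` if `X ∈ SM[𝔽]`, and zero otherwise. -/
noncomputable def W (𝔽 : Program P) (X : Finset P) : WExpr :=
  if SoftStable 𝔽 X then TW (progSat 𝔽 X) else .zero

open Classical in
/-- `W^pnt_𝔽(X) = TW(𝔽 \ 𝔽_X)⁻¹` if `X ∈ SM[𝔽]`, and zero otherwise. -/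
noncomputable def Wpnt (𝔽 : Program P) (X : Finset P) : WExpr :=
  if SoftStable 𝔽 X then (TW (𝔽 \ progSat 𝔽 X)).inv else .zero

/-- `P_𝔽(X)`: the limit as `a → ∞` of the normalized evaluation of `W_𝔽(X)`. -/
noncomputable def Pr [Fintype P] (𝔽 : Program P) (X : Finset P) : ℝ :=
  Filter.limUnder Filter.atTop
    (fun a : ℝ => (W 𝔽 X).eval a / ∑ Y : Finset P, (W 𝔽 Y).eval a)

/-- `P^pnt_𝔽(X)`: the limit as `a → ∞` of the normalized evaluation of `W^pnt_𝔽(X)`. -/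
noncomputable def PrPnt [Fintype P] (𝔽 : Program P) (X : Finset P) : ℝ :=
  Filter.limUnder Filter.atTop
    (fun a : ℝ => (Wpnt 𝔽 X).eval a / ∑ Y : Finset P, (Wpnt 𝔽 Y).eval a)

/-- Weak equivalence: the same probability distribution. -/
def WeakEquiv [Fintype P] (𝔽 𝔾 : Program P) : Prop :=
  ∀ X : Finset P, Pr 𝔽 X = Pr 𝔾 X

/-- Strong equivalence of LP^MLN programs. -/
def StrongEquiv [Fintype P] (𝔽 𝔾 : Program P) : Prop :=
  ∀ (ℍ : Program P) (X : Finset P), Pr (𝔽 ∪ ℍ) X = Pr (𝔾 ∪ ℍ) X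

/-- Structural equivalence of LP^MLN programs. -/
def StructEquiv (𝔽 𝔾 : Program P) : Prop :=
  ∀ (ℍ : Program P) (X : Finset P), SoftStable (𝔽 ∪ ℍ) X ↔ SoftStable (𝔾 ∪ ℍ) X

/-- HT satisfaction `⟨Y,X⟩ ⊨ₕₜ F` (at the world "here"). -/
def htSat (Y X : Finset P) : Formula P → Prop
  | .atom p => p ∈ Y
  | .bot => False
  | .and F G => htSat Y X F ∧ htSat Y X G
  | .or F G => htSat Y X F ∨ htSat Y X G
  | .imp F G => (htSat Y X F → htSat Y X G) ∧ (Formula.imp F G).sat X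

/-- `⟨Y,X⟩` is an HT model of a set `Γ` of formulas. -/
def HTModel (Γ : Finset (Formula P)) (Y X : Finset P) : Prop :=
  Y ⊆ X ∧ ∀ F ∈ Γ, htSat Y X F

/-- `⟨Y,X⟩` is a soft HT model of an LP^MLN program `𝔽`. -/
def SoftHT (𝔽 : Program P) (Y X : Finset P) : Prop :=
  Y ⊆ X ∧ ∀ r ∈ progSat 𝔽 X, htSat Y X r.2

/-- The choice formula `{F}^ch = F ∨ ¬F`. -/
def Formula.ch (F : Formula P) : Formula P := .or F F.neg

/-- `{Γ}^ch`, choice formulas of a set of formulas. -/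
def chSet (Γ : Finset (Formula P)) : Finset (Formula P) := Γ.image Formula.ch

/-- Renaming of atoms. -/
def Formula.rename {Q : Type} (f : P → Q) : Formula P → Formula Q
  | .atom p => .atom (f p)
  | .bot => .bot
  | .and F G => .and (F.rename f) (G.rename f)
  | .or F G => .or (F.rename f) (G.rename f)
  | .imp F G => .imp (F.rename f) (G.rename f)

/-- `Δ_{𝒫'}(F)`, a formula over `𝒫 ∪ 𝒫'`; unprimed atoms are `Sum.inl p`,
primed atoms `p'` are `Sum.inr p`. -/
def Formula.delta : Formula P → Formula (P ⊕ P)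
  | .atom p => .atom (Sum.inr p)
  | .bot => .bot
  | .and F G => .and F.delta G.delta
  | .or F G => .or F.delta G.delta
  | .imp F G => .and (.imp F.delta G.delta)
      (.imp (F.rename Sum.inl) (G.rename Sum.inl))

/-- `Δ_{𝒫'}(Γ)` for a set of formulas. -/
def deltaSet (Γ : Finset (Formula P)) : Finset (Formula (P ⊕ P)) :=
  Γ.image Formula.delta

/-- The interpretation `Y' ∪ X` of `𝒫 ∪ 𝒫'`. -/
def primedInterp (Y X : Finset P) : Finset (P ⊕ P) :=
  X.image Sum.inl ∪ Y.image Sum.inr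

/-! For `Y ⊆ X`, the interpretation `Y' ∪ X` satisfies `Δ_{𝒫'}(F)` exactly when `Y` satisfies the
reduct `F^X`: the primed atoms are read in `Y`, and the unprimed copy of each implication demands
its truth in `X`, which is what the reduct checks. Hence `Δ_{𝒫'}({F}^ch)` holds iff `X ⊭ F` or
`Y ⊨ F^X`, so `Y' ∪ X ⊨ Δ_{𝒫'}({𝔽̄}^ch)` says precisely that `Y` satisfies `(𝔽̄_X)^X`; and `X`
itself always satisfies `(𝔽̄_X)^X`, so the minimality clause is all that remains of stability. -/

namespace Formula

variable {X Y : Finset P}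

theorem eval_of_eval_reduct {F : Formula P} (h : (F.reduct X).eval Y = true) :
    F.eval X = true := by
  cases F <;> unfold reduct at h <;> (try split_ifs at h) <;> simp_all [eval]

theorem eval_reduct_of_eval_eq_false {F : Formula P} (h : F.eval X = false) :
    (F.reduct X).eval Y = false := by
  by_contra hne
  simp [eval_of_eval_reduct (Bool.of_not_eq_false hne)] at h

theorem eval_reduct_self (F : Formula P) : (F.reduct X).eval X = F.eval X := by
  induction F <;> unfold reduct <;> (try split_ifs) <;> simp_all [eval]

theorem eval_rename {Q : Type} [DecidableEq Q] (f : P → Q) {S : Finset Q}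
    (hS : ∀ p, f p ∈ S ↔ p ∈ X) (F : Formula P) : (F.rename f).eval S = F.eval X := by
  induction F <;> simp_all [rename, eval]

theorem eval_delta (hYX : Y ⊆ X) (F : Formula P) :
    F.delta.eval (primedInterp Y X) = (F.reduct X).eval Y := by
  induction F with
  | atom p =>
    by_cases hp : p ∈ X
    · simp [delta, reduct, eval, primedInterp, hp]
    · have hpY : p ∉ Y := fun hY => hp (hYX hY)
      simp [delta, reduct, eval, primedInterp, hp, hpY]
  | bot => rfl
  | and F G ihF ihG =>
    simp only [delta, reduct, eval, ihF, ihG]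
    by_cases hF : F.eval X <;> by_cases hG : G.eval X <;>
      simp_all [eval, eval_reduct_of_eval_eq_false]
  | or F G ihF ihG =>
    simp only [delta, reduct, eval, ihF, ihG]
    by_cases hF : F.eval X <;> by_cases hG : G.eval X <;>
      simp_all [eval, eval_reduct_of_eval_eq_false]
  | imp F G ihF ihG =>
    have hX : ∀ p, Sum.inl p ∈ primedInterp Y X ↔ p ∈ X := by simp [primedInterp]
    simp only [delta, reduct, eval, ihF, ihG, eval_rename _ hX]
    by_cases hF : F.eval X <;> by_cases hG : G.eval X <;>
      simp_all [eval, eval_reduct_of_eval_eq_false]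

theorem eval_delta_ch (hYX : Y ⊆ X) (F : Formula P) :
    F.ch.delta.eval (primedInterp Y X) = (!F.eval X || (F.reduct X).eval Y) := by
  rw [eval_delta hYX]
  by_cases hF : F.eval X <;>
    simp_all [ch, neg, reduct, eval, eval_reduct_of_eval_eq_false]

end Formula

theorem formulas_progSat (𝔽 : Program P) (X : Finset P) :
    formulas (progSat 𝔽 X) = (formulas 𝔽).filter (fun F => F.eval X = true) := by
  ext F
  simp only [formulas, progSat, Finset.mem_image, Finset.mem_filter]
  constructor
  · rintro ⟨r, ⟨hr, hX⟩, rfl⟩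
    exact ⟨⟨r, hr, rfl⟩, hX⟩
  · rintro ⟨⟨r, hr, rfl⟩, hX⟩
    exact ⟨r, ⟨hr, hX⟩, rfl⟩

theorem satSet_reductSet_self_filter (Γ : Finset (Formula P)) (X : Finset P) :
    satSet X (reductSet X (Γ.filter (fun F => F.eval X = true))) := by
  simp only [satSet, reductSet, Finset.forall_mem_image, Finset.mem_filter]
  rintro F ⟨-, hF⟩
  rw [Formula.sat, Formula.eval_reduct_self, hF]

theorem satSet_reductSet_filter_iff {Γ : Finset (Formula P)} {X Y : Finset P} (hYX : Y ⊆ X) :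
    satSet Y (reductSet X (Γ.filter (fun F => F.eval X = true))) ↔
      satSet (primedInterp Y X) (deltaSet (chSet Γ)) := by
  simp only [satSet, reductSet, deltaSet, chSet, Finset.image_image, Finset.forall_mem_image,
    Finset.mem_filter, Function.comp, Formula.sat, Formula.eval_delta_ch hYX]
  refine forall_congr' fun F => ?_
  by_cases hF : F.eval X <;> simp [hF]

/-- `X` is a soft stable model of `𝔽` iff there is no proper subset `Y` of `X`
such that `Y' ∪ X ⊨ Δ_{𝒫'}({𝔽̄}^ch)`. -/
theorem stmt18 {P : Type} [DecidableEq P] (𝔽 : Program P) (X : Finset P) :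
    SoftStable 𝔽 X ↔
      ¬ ∃ Y : Finset P, Y ⊂ X ∧
        satSet (primedInterp Y X) (deltaSet (chSet (formulas 𝔽))) := by
  rw [SoftStable, StableModel, formulas_progSat]
  simp only [satSet_reductSet_self_filter, true_and, not_exists, not_and]
  exact forall₂_congr fun Y hYX => not_congr (satSet_reductSet_filter_iff hYX.subset)

end LPMLN
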